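/- Under sampling without replacement with n1 out of n units treated (n ≥ 3), for any three mutually distinct indices i, j, k, E[(T_i − π)(T_j − π)(T_k − π)] = 2π(1−π)(1−2π)/((n−1)(n−2)), where π = n1/n. -/

import Mathlib

/-! Among the `C(n, n1)` assignments, those treating every unit of a set `S` correspond to the
`(n1 - |S|)`-subsets of the other `n - |S|` units, so `E[∏_{x ∈ S} T_x]` is the ratio of falling
factorials `n1^{(|S|)} / n^{(|S|)}`. Expanding `(T_i - π)(T_j - π)(T_k - π)` and taking
expectations term by term leaves an identity between rational functions of `n` and `n1`. -/

open Finset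

/-- The set of assignment vectors with exactly `n1` treated units. -/
noncomputable def assignSet (n n1 : ℕ) : Finset (Fin n → Bool) :=
  Finset.univ.filter (fun t => (Finset.univ.filter (fun j => t j = true)).card = n1)

/-- Expectation of `f` under the uniform distribution on `assignSet n n1`. -/
noncomputable def cexp (n n1 : ℕ) (f : (Fin n → Bool) → ℝ) : ℝ :=
  (∑ t ∈ assignSet n n1, f t) / (assignSet n n1).card

/-- Indicator of treatment for unit `i`. -/
noncomputable def Tv {n : ℕ} (t : Fin n → Bool) (i : Fin n) : ℝ := if t i then 1 else 0

theorem Nat.choose_mul_descFactorial {n k s : ℕ} (hsk : s ≤ k) :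
    n.choose k * k.descFactorial s = n.descFactorial s * (n - s).choose (k - s) := by
  rw [Nat.descFactorial_eq_factorial_mul_choose, Nat.descFactorial_eq_factorial_mul_choose,
    mul_left_comm, Nat.choose_mul hsk, mul_assoc]

theorem Nat.cast_descFactorial_three {R : Type*} [Ring R] (m : ℕ) :
    (m.descFactorial 3 : R) = m * (m - 1) * (m - 2) := by
  rw [← descPochhammer_eval_eq_descFactorial]
  simp [descPochhammer_succ_eval]

theorem Finset.card_filter_superset_powersetCard {α : Type*} [DecidableEq α] {S u : Finset α}
    {k : ℕ} (hSu : S ⊆ u) (hSk : #S ≤ k) :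
    #{A ∈ powersetCard k u | S ⊆ A} = (#u - #S).choose (k - #S) := by
  rw [← card_sdiff_of_subset hSu, ← card_powersetCard]
  refine card_nbij' (· \ S) (· ∪ S) ?_ ?_ ?_ ?_
  · intro A hA
    simp only [mem_coe, mem_filter, mem_powersetCard] at hA ⊢
    exact ⟨sdiff_subset_sdiff hA.1.1 le_rfl, by rw [card_sdiff_of_subset hA.2, hA.1.2]⟩
  · intro B hB
    simp only [mem_coe, mem_filter, mem_powersetCard, subset_sdiff] at hB ⊢
    refine ⟨⟨union_subset hB.1.1 hSu, ?_⟩, subset_union_right⟩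
    rw [card_union_of_disjoint hB.1.2, hB.2]
    omega
  · intro A hA
    exact sdiff_union_of_subset (mem_filter.mp hA).2
  · intro B hB
    simp only [mem_coe, mem_powersetCard, subset_sdiff] at hB
    exact union_sdiff_cancel_right hB.1.2

theorem card_filter_assignSet_forall_true_eq_card_filter_powersetCard (n n1 : ℕ)
    (S : Finset (Fin n)) :
    #{t ∈ assignSet n n1 | ∀ x ∈ S, t x = true} =
      #{A ∈ powersetCard n1 univ | S ⊆ A} := by
  refine card_nbij' (fun t => ({j | t j = true} : Finset (Fin n))) (fun A x => decide (x ∈ A))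
    ?_ ?_ ?_ ?_
  · intro t ht
    simp only [assignSet, mem_coe, mem_filter, mem_univ, true_and, mem_powersetCard] at ht ⊢
    exact ⟨⟨subset_univ _, ht.1⟩, fun x hx => by simpa using ht.2 x hx⟩
  · intro A hA
    simp only [assignSet, mem_coe, mem_filter, mem_univ, true_and, mem_powersetCard] at hA ⊢
    refine ⟨by simpa using hA.1.2, fun x hx => by simpa using hA.2 hx⟩
  · intro t _
    simp
  · intro A _
    simp

theorem card_filter_assignSet_forall_true {n n1 : ℕ} {S : Finset (Fin n)} (hS : #S ≤ n1) :
    #{t ∈ assignSet n n1 | ∀ x ∈ S, t x = true} = (n - #S).choose (n1 - #S) := by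
  rw [card_filter_assignSet_forall_true_eq_card_filter_powersetCard,
    card_filter_superset_powersetCard (subset_univ S) hS, card_univ, Fintype.card_fin]

theorem card_assignSet (n n1 : ℕ) : #(assignSet n n1) = n.choose n1 := by
  simpa using card_filter_assignSet_forall_true (n := n) (n1 := n1) (S := ∅) (by simp)

theorem sum_prod_Tv_eq_card {n : ℕ} (s : Finset (Fin n → Bool)) (S : Finset (Fin n)) :
    ∑ t ∈ s, ∏ x ∈ S, Tv t x = #{t ∈ s | ∀ x ∈ S, t x = true} := by
  rw [natCast_card_filter]
  simp only [Tv, prod_boole]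
  congr!

theorem cexp_prod_Tv {n n1 : ℕ} (hle : n1 ≤ n) (S : Finset (Fin n)) :
    cexp n n1 (fun t => ∏ x ∈ S, Tv t x) =
      (n1.descFactorial #S : ℝ) / n.descFactorial #S := by
  have hn : (n.descFactorial #S : ℝ) ≠ 0 := by
    exact_mod_cast (Nat.descFactorial_pos.mpr (by simpa using card_le_univ S)).ne'
  have hN : (n.choose n1 : ℝ) ≠ 0 := by exact_mod_cast (Nat.choose_pos hle).ne'
  rw [cexp, sum_prod_Tv_eq_card, card_assignSet, div_eq_div_iff hN hn]
  rcases le_or_gt #S n1 with hS | hS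
  · rw [card_filter_assignSet_forall_true hS]
    norm_cast
    linarith [Nat.choose_mul_descFactorial (n := n) hS]
  · rw [Nat.descFactorial_eq_zero_iff_lt.mpr hS, card_eq_zero.mpr, Nat.cast_zero, zero_mul,
      zero_mul]
    refine filter_eq_empty_iff.mpr fun t ht hall => hS.not_ge ?_
    calc #S ≤ #{j | t j = true} := card_le_card fun x hx => by simpa using hall x hx
      _ = n1 := (mem_filter.mp ht).2

section Linearity

variable {n n1 : ℕ}

theorem cexp_add (f g : (Fin n → Bool) → ℝ) :
    cexp n n1 (fun t => f t + g t) = cexp n n1 f + cexp n n1 g := by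
  simp only [cexp, sum_add_distrib, add_div]

theorem cexp_sub (f g : (Fin n → Bool) → ℝ) :
    cexp n n1 (fun t => f t - g t) = cexp n n1 f - cexp n n1 g := by
  simp only [cexp, sum_sub_distrib, sub_div]

theorem cexp_const_mul (c : ℝ) (f : (Fin n → Bool) → ℝ) :
    cexp n n1 (fun t => c * f t) = c * cexp n n1 f := by
  simp only [cexp, ← mul_sum, mul_div_assoc]

theorem cexp_const (hle : n1 ≤ n) (c : ℝ) : cexp n n1 (fun _ => c) = c := by
  have hN : (#(assignSet n n1) : ℝ) ≠ 0 := by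
    rw [card_assignSet]
    exact_mod_cast (Nat.choose_pos hle).ne'
  rw [cexp, sum_const, nsmul_eq_mul, mul_div_cancel_left₀ c hN]

end Linearity

theorem stmt_6_general (n n1 : ℕ) (hn : 3 ≤ n) (hle : n1 ≤ n) (i j k : Fin n)
    (hij : i ≠ j) (hik : i ≠ k) (hjk : j ≠ k) :
    cexp n n1
        (fun t => (Tv t i - (n1 : ℝ) / n) * (Tv t j - (n1 : ℝ) / n) * (Tv t k - (n1 : ℝ) / n))
      = 2 * (((n1 : ℝ) / n) * (1 - (n1 : ℝ) / n) * (1 - 2 * ((n1 : ℝ) / n)))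
          / (((n : ℝ) - 1) * ((n : ℝ) - 2)) := by
  set p : ℝ := (n1 : ℝ) / n with hp
  have hexpand : (fun t => (Tv t i - p) * (Tv t j - p) * (Tv t k - p)) = fun t =>
      ∏ x ∈ {i, j, k}, Tv t x
        - p * (∏ x ∈ {i, j}, Tv t x + ∏ x ∈ {i, k}, Tv t x + ∏ x ∈ {j, k}, Tv t x)
        + p ^ 2 * (∏ x ∈ {i}, Tv t x + ∏ x ∈ {j}, Tv t x + ∏ x ∈ {k}, Tv t x)
        - p ^ 3 := by
    funext t
    rw [prod_insert (by simp [hij, hik]), prod_pair hij, prod_pair hik, prod_pair hjk,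
      prod_singleton, prod_singleton, prod_singleton]
    ring
  have hcard3 : #{i, j, k} = 3 := card_eq_three.mpr ⟨i, j, k, hij, hik, hjk, rfl⟩
  have hn' : (3 : ℝ) ≤ n := by exact_mod_cast hn
  have hn1 : (n : ℝ) - 1 ≠ 0 := by linarith
  have hn2 : (n : ℝ) - 2 ≠ 0 := by linarith
  rw [hexpand]
  simp only [cexp_sub, cexp_add, cexp_const_mul, cexp_prod_Tv hle, cexp_const hle, hcard3,
    card_pair hij, card_pair hik, card_pair hjk, card_singleton, Nat.descFactorial_one,
    Nat.cast_descFactorial_two, Nat.cast_descFactorial_three, hp]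
  field_simp
  ring

theorem stmt_6 (n n1 : ℕ) (hn : 3 ≤ n) (h1 : 1 ≤ n1) (hle : n1 ≤ n) (i j k : Fin n)
    (hij : i ≠ j) (hik : i ≠ k) (hjk : j ≠ k) :
    cexp n n1
        (fun t => (Tv t i - (n1 : ℝ) / n) * (Tv t j - (n1 : ℝ) / n) * (Tv t k - (n1 : ℝ) / n))
      = 2 * (((n1 : ℝ) / n) * (1 - (n1 : ℝ) / n) * (1 - 2 * ((n1 : ℝ) / n)))
          / (((n : ℝ) - 1) * ((n : ℝ) - 2)) :=
  stmt_6_general n n1 hn hle i j k hij hik hjk
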